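/- Let A be an MR-subalgebra of 𝓛ₙ, let Γᵢ = {a ∈ CoAt(A) : |𝒞ₐ| = i} for 1 ≤ i ≤ n, and let ψ be an automorphism of A. Then there exists an automorphism Φ of 𝓛ₙ with Φ[A] = A and Φ|A = ψ if and only if ψ[Γᵢ] = Γᵢ for all i. -/

import Mathlib

@[ext] structure Cube (n : ℕ) where
  pos : Finset (Fin n)
  neg : Finset (Fin n)
  disj : Disjoint pos neg

namespace Cube
variable {n : ℕ}

instance : PartialOrder (Cube n) where
  le x y := y.pos ⊆ x.pos ∧ y.neg ⊆ x.neg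
  le_refl x := ⟨subset_rfl, subset_rfl⟩
  le_trans x y z h₁ h₂ := ⟨h₂.1.trans h₁.1, h₂.2.trans h₁.2⟩
  le_antisymm x y h₁ h₂ :=
    Cube.ext (subset_antisymm h₂.1 h₁.1) (subset_antisymm h₂.2 h₁.2)

instance : OrderTop (Cube n) where
  top := ⟨∅, ∅, by simp⟩
  le_top x := ⟨Finset.empty_subset _, Finset.empty_subset _⟩

instance : SemilatticeSup (Cube n) where
  sup x y := ⟨x.pos ∩ y.pos, x.neg ∩ y.neg,
    x.disj.mono Finset.inter_subset_left Finset.inter_subset_left⟩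
  le_sup_left x y := ⟨Finset.inter_subset_left, Finset.inter_subset_left⟩
  le_sup_right x y := ⟨Finset.inter_subset_right, Finset.inter_subset_right⟩
  sup_le x y z hx hy := ⟨Finset.subset_inter hx.1 hy.1, Finset.subset_inter hx.2 hy.2⟩

/-- The reflection `Δ(x, y)` of `y` through the centre of `x`. -/
def delta (x y : Cube n) : Cube n :=
  ⟨x.pos ∪ (y.neg \ x.neg), x.neg ∪ (y.pos \ x.pos), by
    simp only [Finset.disjoint_union_left, Finset.disjoint_union_right]
    refine ⟨⟨x.disj, Finset.sdiff_disjoint⟩, Finset.disjoint_sdiff, ?_⟩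
    exact y.disj.symm.mono Finset.sdiff_subset Finset.sdiff_subset⟩

lemma delta_le (x y : Cube n) : delta x y ≤ x :=
  ⟨Finset.subset_union_left, Finset.subset_union_left⟩

/-- The co-rank of a face of the `n`-cube. -/
def corank (x : Cube n) : ℕ := (x.pos ∪ x.neg).card

/-- The set of coatoms of `𝓛ₙ` lying above `a`. -/
def coatomsAbove (a : Cube n) : Set (Cube n) := {c | corank c = 1 ∧ a ≤ c}

/-- `A` is an MR-subalgebra of `𝓛ₙ`. -/
def IsMRSub (A : Set (Cube n)) : Prop :=
  ⊤ ∈ A ∧ (∀ x ∈ A, ∀ y ∈ A, x ⊔ y ∈ A) ∧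
    (∀ x ∈ A, ∀ y ∈ A, y ≤ x → delta x y ∈ A) ∧
    (∀ x ∈ A, ∀ y ∈ A, ∃ m ∈ A, IsGLB {x, delta (x ⊔ y) y} m)

/-- The coatoms of a subalgebra `A`: maximal elements of `A \ {⊤}`. -/
def coAt (A : Set (Cube n)) : Set (Cube n) :=
  {a | a ∈ A ∧ a ≠ ⊤ ∧ ∀ b ∈ A, b ≠ ⊤ → a ≤ b → b = a}

/-- The coatoms `a` of `A` with `|𝒞ₐ| = i`. -/
def typeSet (A : Set (Cube n)) (i : ℕ) : Set (Cube n) :=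
  {a | a ∈ coAt A ∧ (coatomsAbove a).ncard = i}

/-- An order automorphism of `𝓛ₙ` is a cubic automorphism when it preserves `Δ`. -/
def IsAut (φ : Cube n ≃o Cube n) : Prop :=
  ∀ x y : Cube n, y ≤ x → φ (delta x y) = delta (φ x) (φ y)

/-- The set of automorphisms of `𝓛ₙ`. -/
def AutSet (n : ℕ) : Set (Cube n ≃o Cube n) := {φ | IsAut φ}

/-- An automorphism of the subposet `A` preserving `Δ`. -/
def IsSubAut {A : Set (Cube n)} (ψ : A ≃o A) : Prop :=
  ∀ (x y : A), (y : Cube n) ≤ (x : Cube n) → ∀ h : delta ↑x ↑y ∈ A,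
    (ψ ⟨delta ↑x ↑y, h⟩ : Cube n) = delta ↑(ψ x) ↑(ψ y)

end Cube

/-!
An automorphism `Φ` of `𝓛ₙ` is an order isomorphism, so it carries the coatoms of `𝓛ₙ` above `a`
onto those above `Φ a`; hence `|𝒞_{Φ a}| = |𝒞ₐ|`, and the restriction `ψ = Φ|A`, which permutes
`CoAt(A)`, preserves each `Γᵢ`.

Conversely, `|𝒞ₐ|` is the number of coordinates in the support of `a`. As `A` is closed under joins
and under `x ↦ Δ(𝟙, x) = x*`, two coatoms of `A` are equal, opposite, or have disjoint supports,
and `ψ` commutes with `*`. So the supports of the coatoms are disjoint blocks of coordinates, which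
`ψ` permutes preserving their sizes when it preserves the `Γᵢ`. A permutation of `Fin n` carrying
each block onto its image, composed with the sign changes matching each coatom with its image, is
an automorphism of `𝓛ₙ` that agrees with `ψ` on `CoAt(A)`. Finally every `x ∈ A` is the meet of the
coatoms of `A` above it, because `x ⊔ Δ(z, x)*` deletes from `x` the coordinates of any `z ≥ x`;
so the two maps agree on all of `A`.
-/

open Finset

lemma Set.image_eq_self_of_eq_perm {α : Type*} {A : Set α} {f : α → α} (e : Equiv.Perm A)
    (h : ∀ x : A, f x = e x) : f '' A = A := by
  ext z
  constructor
  · rintro ⟨x, hx, rfl⟩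
    exact h ⟨x, hx⟩ ▸ (e _).2
  · intro hz
    exact ⟨e.symm ⟨z, hz⟩, (e.symm _).2, by rw [h, Equiv.apply_symm_apply]⟩

lemma Set.image_coe_perm_eq_of_mem_iff {α : Type*} {A P : Set α} (e : Equiv.Perm A) (hP : P ⊆ A)
    (h : ∀ a : A, (e a : α) ∈ P ↔ (a : α) ∈ P) :
    (fun a : A => (e a : α)) '' {a : A | (a : α) ∈ P} = P := by
  ext z
  constructor
  · rintro ⟨a, ha, rfl⟩
    exact (h a).mpr ha
  · intro hz
    exact ⟨e.symm ⟨z, hP hz⟩, (h _).mp (by simpa using hz), by simp⟩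

lemma Set.InjOn.exists_perm_eqOn {α : Type*} [Fintype α] {s : Set α} {f : α → α}
    (hf : s.InjOn f) : ∃ π : Equiv.Perm α, s.EqOn π f := by
  classical
  obtain ⟨g, hg⟩ := Set.MapsTo.exists_equiv_extend_of_card_eq (t := Finset.univ)
    (Finset.card_univ).symm (fun x _ => Finset.mem_coe.mpr (Finset.mem_univ (f x))) hf
  exact ⟨g.trans (Equiv.subtypeUnivEquiv Finset.mem_univ), hg⟩

lemma Finset.exists_bijOn_of_card_eq {α : Type*} {s t : Finset α} (h : #s = #t) :
    ∃ f : α → α, Set.BijOn f s t := by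
  rcases s.eq_empty_or_nonempty with rfl | ⟨a, -⟩
  · rw [card_empty, eq_comm, card_eq_zero] at h
    exact ⟨id, by simp [h]⟩
  · have : Nonempty α := ⟨a⟩
    exact s.finite_toSet.exists_bijOn_of_encard_eq (by simpa using h)

lemma Finset.exists_perm_mapsTo_of_blocks {ι α : Type*} [Fintype α] (B T : ι → Finset α)
    (hB : ∀ i i', ¬Disjoint (B i) (B i') → B i = B i' ∧ T i = T i')
    (hT : ∀ i i', ¬Disjoint (T i) (T i') → B i = B i')
    (hcard : ∀ i, #(T i) = #(B i)) :
    ∃ π : Equiv.Perm α, ∀ i, Set.MapsTo π (B i) (T i) := by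
  classical
  -- The bijections are chosen per block `D`, not per index, so indices sharing a block agree.
  have hblock (D : Finset α) :
      ∃ e : α → α, ∀ i, B i = D → Set.MapsTo e D (T i) ∧ Set.InjOn e D := by
    by_cases hD : ∃ i, B i = D
    · obtain ⟨i, rfl⟩ := hD
      obtain ⟨e, he⟩ := Finset.exists_bijOn_of_card_eq (hcard i).symm
      refine ⟨e, fun i' hi' => ?_⟩
      rcases (B i).eq_empty_or_nonempty with h0 | ⟨j, hj⟩
      · simp [h0, Set.mapsTo_empty]
      · rw [← (hB i i' (Finset.not_disjoint_iff.mpr ⟨j, hj, hi' ▸ hj⟩)).2]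
        exact ⟨he.mapsTo, he.injOn⟩
    · exact ⟨id, fun i hi => absurd ⟨i, hi⟩ hD⟩
  choose e he using hblock
  let f : α → α := fun j => if h : ∃ i, j ∈ B i then e (B h.choose) j else j
  have hf (i : ι) (j : α) (hj : j ∈ B i) : f j = e (B i) j := by
    have h : ∃ i, j ∈ B i := ⟨i, hj⟩
    simp only [f]
    rw [dif_pos h, (hB _ _ (Finset.not_disjoint_iff.mpr ⟨j, h.choose_spec, hj⟩)).1]
  obtain ⟨π, hπ⟩ := Set.InjOn.exists_perm_eqOn (s := ⋃ i, (B i : Set α)) (f := f) (by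
    simp only [Set.InjOn, Set.mem_iUnion, Finset.mem_coe]
    rintro j ⟨i, hj⟩ k ⟨i', hk⟩ hjk
    rw [hf i j hj, hf i' k hk] at hjk
    have hBB := hT i i' (Finset.not_disjoint_iff.mpr
      ⟨_, (he _ i rfl).1 hj, hjk ▸ (he _ i' rfl).1 hk⟩)
    rw [← hBB] at hk hjk
    exact (he _ i rfl).2 hj hk hjk)
  refine ⟨π, fun i j hj => ?_⟩
  rw [hπ (Set.mem_iUnion_of_mem i hj), hf i j hj]
  exact (he _ i rfl).1 hj

namespace Cube
variable {n : ℕ}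

@[simp] lemma top_pos : (⊤ : Cube n).pos = ∅ := rfl
@[simp] lemma top_neg : (⊤ : Cube n).neg = ∅ := rfl
@[simp] lemma sup_pos (x y : Cube n) : (x ⊔ y).pos = x.pos ∩ y.pos := rfl
@[simp] lemma sup_neg (x y : Cube n) : (x ⊔ y).neg = x.neg ∩ y.neg := rfl
@[simp] lemma delta_pos (x y : Cube n) : (delta x y).pos = x.pos ∪ (y.neg \ x.neg) := rfl
@[simp] lemma delta_neg (x y : Cube n) : (delta x y).neg = x.neg ∪ (y.pos \ x.pos) := rfl

instance : Finite (Cube n) :=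
  Finite.of_injective (fun x : Cube n => (x.pos, x.neg)) fun _ _ h =>
    Cube.ext (congrArg Prod.fst h) (congrArg Prod.snd h)

lemma le_iff {x y : Cube n} : x ≤ y ↔ y.pos ⊆ x.pos ∧ y.neg ⊆ x.neg := Iff.rfl

lemma notMem_neg_of_mem_pos {x : Cube n} {j : Fin n} (h : j ∈ x.pos) : j ∉ x.neg :=
  disjoint_left.mp x.disj h

lemma sup_eq_top_iff {x y : Cube n} :
    x ⊔ y = ⊤ ↔ Disjoint x.pos y.pos ∧ Disjoint x.neg y.neg := by
  simp [Cube.ext_iff, disjoint_iff_inter_eq_empty]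

def support (x : Cube n) : Finset (Fin n) := x.pos ∪ x.neg

lemma mem_support {x : Cube n} {j : Fin n} : j ∈ support x ↔ j ∈ x.pos ∨ j ∈ x.neg := mem_union

lemma corank_eq_card_support (x : Cube n) : corank x = #(support x) := rfl

lemma support_anti {x y : Cube n} (h : x ≤ y) : support y ⊆ support x :=
  union_subset_union h.1 h.2

@[simp] lemma support_top : support (⊤ : Cube n) = ∅ := rfl

@[simp] lemma support_eq_empty {x : Cube n} : support x = ∅ ↔ x = ⊤ := by
  simp [support, Cube.ext_iff]

def restrict (x : Cube n) (s : Finset (Fin n)) : Cube n :=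
  ⟨x.pos ∩ s, x.neg ∩ s, x.disj.mono inter_subset_left inter_subset_left⟩

@[simp] lemma restrict_pos (x : Cube n) (s : Finset (Fin n)) : (restrict x s).pos = x.pos ∩ s := rfl
@[simp] lemma restrict_neg (x : Cube n) (s : Finset (Fin n)) : (restrict x s).neg = x.neg ∩ s := rfl

lemma le_restrict (x : Cube n) (s : Finset (Fin n)) : x ≤ restrict x s :=
  ⟨inter_subset_left, inter_subset_left⟩

lemma support_restrict (x : Cube n) (s : Finset (Fin n)) :
    support (restrict x s) = support x ∩ s :=
  (union_inter_distrib_right _ _ _).symm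

lemma restrict_support_of_le {x y : Cube n} (h : x ≤ y) : restrict x (support y) = y := by
  have hx := disjoint_left.mp x.disj
  ext j <;> simp only [restrict_pos, restrict_neg, mem_inter, mem_support] <;>
    constructor <;> grind [le_iff]

def star (x : Cube n) : Cube n := ⟨x.neg, x.pos, x.disj.symm⟩

@[simp] lemma star_pos (x : Cube n) : (star x).pos = x.neg := rfl
@[simp] lemma star_neg (x : Cube n) : (star x).neg = x.pos := rfl
@[simp] lemma star_star (x : Cube n) : star (star x) = x := rfl
@[simp] lemma support_star (x : Cube n) : support (star x) = support x := union_comm _ _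
@[simp] lemma star_le_star_iff {x y : Cube n} : star x ≤ star y ↔ x ≤ y := and_comm
@[simp] lemma star_eq_top_iff {x : Cube n} : star x = ⊤ ↔ x = ⊤ := by
  rw [← support_eq_empty, support_star, support_eq_empty]

lemma delta_top (x : Cube n) : delta ⊤ x = star x := by
  ext <;> simp [star]

lemma disjoint_support_iff {x y : Cube n} :
    Disjoint (support x) (support y) ↔ x ⊔ y = ⊤ ∧ x ⊔ star y = ⊤ := by
  simp only [sup_eq_top_iff, support, disjoint_union_left, disjoint_union_right, star_pos,
    star_neg]
  tauto

lemma corank_eq_one_iff {c : Cube n} : corank c = 1 ↔ IsCoatom c := by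
  rw [corank_eq_card_support, card_eq_one]
  constructor
  · rintro ⟨j, hj⟩
    refine ⟨fun h => by simp [h] at hj, fun b hcb => ?_⟩
    have hsub : support b ⊆ {j} := hj ▸ support_anti hcb.le
    rcases subset_singleton_iff.mp hsub with h | h
    · exact support_eq_empty.mp h
    · refine absurd ?_ hcb.ne'
      rw [← restrict_support_of_le hcb.le, h, ← hj, restrict_support_of_le le_rfl]
  · rintro ⟨hc, hmax⟩
    obtain ⟨j, hj⟩ := nonempty_iff_ne_empty.mpr (support_eq_empty.not.mpr hc)
    refine ⟨j, ?_⟩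
    rcases (le_restrict c {j}).eq_or_lt with h | h
    · rw [h, support_restrict, inter_singleton_of_mem hj]
    · have := hmax _ h
      rw [← support_eq_empty, support_restrict, inter_singleton_of_mem hj] at this
      exact absurd this (singleton_ne_empty j)

lemma coatomsAbove_eq_image (a : Cube n) :
    coatomsAbove a = (fun j => restrict a {j}) '' support a := by
  ext c
  constructor
  · rintro ⟨hc, hac⟩
    rw [corank_eq_card_support, card_eq_one] at hc
    obtain ⟨j, hj⟩ := hc
    refine ⟨j, support_anti hac (hj ▸ mem_singleton_self j), ?_⟩
    simp only [← hj, restrict_support_of_le hac]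
  · rintro ⟨j, hj, rfl⟩
    refine ⟨?_, le_restrict a {j}⟩
    rw [corank_eq_card_support, support_restrict, inter_singleton_of_mem hj, card_singleton]

lemma ncard_coatomsAbove (a : Cube n) : (coatomsAbove a).ncard = corank a := by
  rw [coatomsAbove_eq_image, Set.InjOn.ncard_image, Set.ncard_coe_finset,
    corank_eq_card_support]
  intro j hj k hk hjk
  have := congrArg support hjk
  simp only [support_restrict, inter_singleton_of_mem (mem_coe.mp hj),
    inter_singleton_of_mem (mem_coe.mp hk), singleton_inj] at this
  exact this

lemma coatomsAbove_map (φ : Cube n ≃o Cube n) (x : Cube n) :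
    coatomsAbove (φ x) = φ '' coatomsAbove x := by
  ext c
  simp only [coatomsAbove, corank_eq_one_iff, Set.mem_image]
  constructor
  · rintro ⟨hc, hxc⟩
    exact ⟨φ.symm c, ⟨by rwa [← φ.isCoatom_iff, φ.apply_symm_apply], φ.le_symm_apply.mpr hxc⟩,
      φ.apply_symm_apply c⟩
  · rintro ⟨d, ⟨hd, hxd⟩, rfl⟩
    exact ⟨(φ.isCoatom_iff d).mpr hd, φ.monotone hxd⟩

lemma ncard_coatomsAbove_map (φ : Cube n ≃o Cube n) (x : Cube n) :
    (coatomsAbove (φ x)).ncard = (coatomsAbove x).ncard := by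
  rw [coatomsAbove_map, Set.ncard_image_of_injective _ φ.injective]

def signFlip (F : Finset (Fin n)) (x : Cube n) : Cube n :=
  ⟨(x.pos \ F) ∪ (x.neg ∩ F), (x.neg \ F) ∪ (x.pos ∩ F), by
    have := disjoint_left.mp x.disj
    rw [disjoint_left]
    simp only [mem_union, mem_sdiff, mem_inter]
    tauto⟩

@[simp] lemma signFlip_pos (F : Finset (Fin n)) (x : Cube n) :
    (signFlip F x).pos = (x.pos \ F) ∪ (x.neg ∩ F) := rfl
@[simp] lemma signFlip_neg (F : Finset (Fin n)) (x : Cube n) :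
    (signFlip F x).neg = (x.neg \ F) ∪ (x.pos ∩ F) := rfl

lemma signFlip_involutive (F : Finset (Fin n)) : Function.Involutive (signFlip F) := by
  intro x
  have := disjoint_left.mp x.disj
  ext j <;> simp only [signFlip_pos, signFlip_neg, mem_union, mem_sdiff, mem_inter] <;> tauto

lemma signFlip_mono (F : Finset (Fin n)) : Monotone (signFlip F) := fun _ _ h =>
  ⟨union_subset_union (sdiff_subset_sdiff h.1 le_rfl) (inter_subset_inter h.2 le_rfl),
    union_subset_union (sdiff_subset_sdiff h.2 le_rfl) (inter_subset_inter h.1 le_rfl)⟩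

lemma signFlip_delta (F : Finset (Fin n)) (x y : Cube n) :
    signFlip F (delta x y) = delta (signFlip F x) (signFlip F y) := by
  ext j <;> simp only [signFlip_pos, signFlip_neg, delta_pos, delta_neg, mem_union, mem_sdiff,
    mem_inter] <;> tauto

def permute (π : Equiv.Perm (Fin n)) (x : Cube n) : Cube n :=
  ⟨x.pos.map π.toEmbedding, x.neg.map π.toEmbedding, (disjoint_map _).mpr x.disj⟩

@[simp] lemma permute_pos (π : Equiv.Perm (Fin n)) (x : Cube n) :
    (permute π x).pos = x.pos.map π.toEmbedding := rfl
@[simp] lemma permute_neg (π : Equiv.Perm (Fin n)) (x : Cube n) :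
    (permute π x).neg = x.neg.map π.toEmbedding := rfl

lemma permute_symm_permute (π : Equiv.Perm (Fin n)) (x : Cube n) :
    permute π.symm (permute π x) = x := by
  ext j <;> simp

lemma permute_mono (π : Equiv.Perm (Fin n)) : Monotone (permute π) := fun _ _ h =>
  ⟨map_subset_map.mpr h.1, map_subset_map.mpr h.2⟩

lemma permute_delta (π : Equiv.Perm (Fin n)) (x y : Cube n) :
    permute π (delta x y) = delta (permute π x) (permute π y) := by
  ext1 <;> simp [Finset.map_union, Finset.map_sdiff]

def signedPerm (π : Equiv.Perm (Fin n)) (F : Finset (Fin n)) : Cube n ≃o Cube n :=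
  ((signFlip_involutive F).toPerm.toOrderIso (signFlip_mono F) (signFlip_mono F)).trans
    ((Equiv.mk (permute π) (permute π.symm) (permute_symm_permute π)
      fun x => by simpa using permute_symm_permute π.symm x).toOrderIso (permute_mono π)
      (permute_mono π.symm))

lemma signedPerm_apply (π : Equiv.Perm (Fin n)) (F : Finset (Fin n)) (x : Cube n) :
    signedPerm π F x = permute π (signFlip F x) := rfl

lemma isAut_signedPerm (π : Equiv.Perm (Fin n)) (F : Finset (Fin n)) :
    IsAut (signedPerm π F) := fun x y _ => by
  simp only [signedPerm_apply, signFlip_delta, permute_delta]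

lemma signedPerm_apply_eq {π : Equiv.Perm (Fin n)} {F : Finset (Fin n)} {x y : Cube n}
    (hsupp : (support x).map π.toEmbedding = support y)
    (hF : ∀ j ∈ support x, j ∈ F ↔ (j ∈ x.pos ↔ π j ∈ y.neg)) :
    signedPerm π F x = y := by
  have hx := disjoint_left.mp x.disj
  have hy := disjoint_left.mp y.disj
  have hmem (j : Fin n) : π j ∈ support y ↔ j ∈ support x := by
    rw [← hsupp, mem_map_equiv, Equiv.symm_apply_apply]
  ext k <;> obtain ⟨j, rfl⟩ := π.surjective k <;>
    simp only [signedPerm_apply, permute_pos, permute_neg, mem_map_equiv, Equiv.symm_apply_apply,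
      signFlip_pos, signFlip_neg, mem_union, mem_sdiff, mem_inter] <;>
    have := hF j <;> have := hmem j <;> simp only [mem_support] at * <;> grind

def IsSeparated (S : Set (Cube n)) : Prop :=
  ∀ a ∈ S, ∀ b ∈ S, ¬Disjoint (support a) (support b) → b = a ∨ b = star a

lemma exists_signedPerm_eqOn {S : Set (Cube n)} {g : Cube n → Cube n} (hS : IsSeparated S)
    (hS_star : ∀ a ∈ S, star a ∈ S) (hgS : Set.MapsTo g S S) (hg_inj : S.InjOn g)
    (hg_star : ∀ a ∈ S, g (star a) = star (g a)) (hg_corank : ∀ a ∈ S, corank (g a) = corank a) :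
    ∃ π F, S.EqOn (signedPerm π F) g := by
  classical
  have hsupp_eq {a b : Cube n} (ha : a ∈ S) (hb : b ∈ S)
      (hab : ¬Disjoint (support a) (support b)) :
      support a = support b ∧ support (g a) = support (g b) := by
    rcases hS a ha b hb hab with rfl | rfl
    · exact ⟨rfl, rfl⟩
    · simp [hg_star a ha]
  obtain ⟨π, hπ⟩ := Finset.exists_perm_mapsTo_of_blocks (ι := S) (fun a => support a)
    (fun a => support (g a)) (fun a b hab => hsupp_eq a.2 b.2 hab)
    (fun a b hab => by
      rcases hS _ (hgS a.2) _ (hgS b.2) hab with h | h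
      · rw [hg_inj b.2 a.2 h]
      · rw [← hg_star a a.2] at h
        rw [hg_inj b.2 (hS_star a a.2) h, support_star])
    (fun a => by simp only [← corank_eq_card_support, hg_corank a a.2])
  have hmap (a : Cube n) (ha : a ∈ S) : (support a).map π.toEmbedding = support (g a) :=
    eq_of_subset_of_card_le (fun k hk => by
        obtain ⟨j, hj, rfl⟩ := mem_map.mp hk
        exact hπ ⟨a, ha⟩ hj)
      (by rw [card_map, ← corank_eq_card_support, ← corank_eq_card_support, hg_corank a ha])
  -- Whether `j` is flipped does not depend on the member of `S` testing it: those containing `j`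
  -- in their support are some `a` and `star a`.
  let F : Finset (Fin n) := univ.filter fun j => ∃ a ∈ S, j ∈ a.pos ∧ π j ∈ (g a).neg
  refine ⟨π, F, fun a ha => signedPerm_apply_eq (hmap a ha) fun j hj => ?_⟩
  have hπj : π j ∈ support (g a) := hmap a ha ▸ mem_map_of_mem _ hj
  simp only [F, mem_filter, mem_univ, true_and]
  constructor
  · rintro ⟨b, hb, hjb, hπjb⟩
    rcases hS b hb a ha (not_disjoint_iff.mpr ⟨j, mem_support.mpr (.inl hjb), hj⟩) with rfl | rfl
    · exact iff_of_true hjb hπjb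
    · rw [hg_star b hb, star_neg, star_pos]
      exact iff_of_false (notMem_neg_of_mem_pos hjb) fun h => notMem_neg_of_mem_pos h hπjb
  · intro h
    by_cases hja : j ∈ a.pos
    · exact ⟨a, ha, hja, h.mp hja⟩
    · refine ⟨star a, hS_star a ha, (mem_support.mp hj).resolve_left hja, ?_⟩
      rw [hg_star a ha, star_neg]
      exact (mem_support.mp hπj).resolve_right (mt h.mpr hja)

variable {A : Set (Cube n)}

lemma sup_star_delta {y z : Cube n} (h : y ≤ z) :
    y ⊔ star (delta z y) = restrict y (support z)ᶜ := by
  have hy := disjoint_left.mp y.disj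
  ext j <;> simp only [sup_pos, sup_neg, star_pos, star_neg, delta_pos, delta_neg, restrict_pos,
    restrict_neg, support, mem_inter, mem_union, mem_sdiff, mem_compl] <;> grind [le_iff]

lemma orderIso_apply_top (hT : ⊤ ∈ A) (e : A ≃o A) : e ⟨⊤, hT⟩ = ⟨⊤, hT⟩ := by
  have hle (x : A) : x ≤ ⟨⊤, hT⟩ := (le_top : (x : Cube n) ≤ ⊤)
  exact le_antisymm (hle _) (e.symm_apply_le.mp (hle _))

lemma coe_orderIso_apply_eq_top_iff (hT : ⊤ ∈ A) (e : A ≃o A) (x : A) :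
    (e x : Cube n) = ⊤ ↔ (x : Cube n) = ⊤ := by
  have htop (y : A) : (y : Cube n) = ⊤ ↔ y = ⟨⊤, hT⟩ := ⟨fun h => Subtype.ext h, fun h => h ▸ rfl⟩
  rw [htop, htop, ← e.apply_eq_iff_eq (x := x), orderIso_apply_top]

lemma coe_orderIso_apply_mem_coAt (hT : ⊤ ∈ A) (e : A ≃o A) {a : A} (ha : (a : Cube n) ∈ coAt A) :
    (e a : Cube n) ∈ coAt A := by
  obtain ⟨-, hat, hmax⟩ := ha
  refine ⟨(e a).2, (coe_orderIso_apply_eq_top_iff hT e a).not.mpr hat, fun b hb hbt hab => ?_⟩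
  lift b to A using hb
  have hb' : e.symm b = a := Subtype.ext <| hmax _ (e.symm b).2
    (fun h => hbt (by rwa [← e.apply_symm_apply b, coe_orderIso_apply_eq_top_iff hT e]))
    (e.le_symm_apply.mpr hab)
  rw [← hb', e.apply_symm_apply]

lemma coe_orderIso_apply_mem_coAt_iff (hT : ⊤ ∈ A) (e : A ≃o A) (a : A) :
    (e a : Cube n) ∈ coAt A ↔ (a : Cube n) ∈ coAt A :=
  ⟨fun h => by simpa using coe_orderIso_apply_mem_coAt hT e.symm h,
    coe_orderIso_apply_mem_coAt hT e⟩

structure IsSupDeltaClosed (A : Set (Cube n)) : Prop where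
  top_mem : ⊤ ∈ A
  sup_mem : ∀ x ∈ A, ∀ y ∈ A, x ⊔ y ∈ A
  delta_mem : ∀ x ∈ A, ∀ y ∈ A, y ≤ x → delta x y ∈ A

lemma IsMRSub.isSupDeltaClosed (hA : IsMRSub A) : IsSupDeltaClosed A :=
  ⟨hA.1, hA.2.1, hA.2.2.1⟩

namespace IsSupDeltaClosed

lemma star_mem (hA : IsSupDeltaClosed A) {x : Cube n} (hx : x ∈ A) : star x ∈ A :=
  delta_top x ▸ hA.delta_mem ⊤ hA.top_mem x hx le_top

lemma restrict_compl_support_mem (hA : IsSupDeltaClosed A) {y z : Cube n} (hy : y ∈ A)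
    (hz : z ∈ A) (h : y ≤ z) : restrict y (support z)ᶜ ∈ A :=
  sup_star_delta h ▸ hA.sup_mem y hy _ (hA.star_mem (hA.delta_mem z hz y hy h))

lemma exists_coAt_le (hA : IsSupDeltaClosed A) {x : Cube n} (hx : x ∈ A) {j : Fin n}
    (hj : j ∈ support x) : ∃ a ∈ coAt A, x ≤ a ∧ j ∈ support a := by
  obtain ⟨y, ⟨hyA, hxy, hjy⟩, hmax⟩ :=
    (Set.toFinite {y | y ∈ A ∧ x ≤ y ∧ j ∈ support y}).exists_maximal ⟨x, hx, le_rfl, hj⟩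
  refine ⟨y, ⟨hyA, fun h => by simp [h] at hjy, fun z hzA hz hyz => ?_⟩, hxy, hjy⟩
  by_cases hjz : j ∈ support z
  · exact (hmax ⟨hzA, hxy.trans hyz, hjz⟩ hyz).antisymm hyz
  -- Deleting the coordinates of `z` from `y` keeps `j`, so by maximality `z` has none.
  have hu := hmax ⟨hA.restrict_compl_support_mem hyA hzA hyz, hxy.trans (le_restrict _ _),
    by simp [support_restrict, hjy, hjz]⟩ (le_restrict _ _)
  obtain ⟨k, hk⟩ := nonempty_iff_ne_empty.mpr (support_eq_empty.not.mpr hz)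
  simpa [support_restrict, hk] using support_anti hu (support_anti hyz hk)

lemma isGLB_coAt (hA : IsSupDeltaClosed A) {x : Cube n} (hx : x ∈ A) :
    IsGLB {a | a ∈ coAt A ∧ x ≤ a} x := by
  refine ⟨fun a ha => ha.2, fun y hy => ⟨fun j hj => ?_, fun j hj => ?_⟩⟩
  · obtain ⟨a, ha, hxa, hja⟩ := hA.exists_coAt_le hx (mem_support.mpr (.inl hj))
    exact (hy ⟨ha, hxa⟩).1 (restrict_support_of_le hxa ▸ mem_inter.mpr ⟨hj, hja⟩)
  · obtain ⟨a, ha, hxa, hja⟩ := hA.exists_coAt_le hx (mem_support.mpr (.inr hj))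
    exact (hy ⟨ha, hxa⟩).2 (restrict_support_of_le hxa ▸ mem_inter.mpr ⟨hj, hja⟩)

lemma sup_eq_top_or_eq (hA : IsSupDeltaClosed A) {a b : Cube n} (ha : a ∈ coAt A)
    (hb : b ∈ coAt A) : a ⊔ b = ⊤ ∨ b = a := by
  by_contra! h
  have hab := ha.2.2 _ (hA.sup_mem a ha.1 b hb.1) h.1 le_sup_left
  exact h.2 (hb.2.2 a ha.1 ha.2.1 (hab ▸ le_sup_right)).symm

lemma star_mem_coAt (hA : IsSupDeltaClosed A) {a : Cube n} (ha : a ∈ coAt A) :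
    star a ∈ coAt A := by
  refine ⟨hA.star_mem ha.1, star_eq_top_iff.not.mpr ha.2.1, fun b hb hbt hab => ?_⟩
  have := ha.2.2 (star b) (hA.star_mem hb) (star_eq_top_iff.not.mpr hbt)
    (by simpa using star_le_star_iff.mpr hab)
  rw [← this, star_star]

lemma isSeparated_coAt (hA : IsSupDeltaClosed A) : IsSeparated (coAt A) := by
  intro a ha b hb hab
  rw [disjoint_support_iff] at hab
  rcases hA.sup_eq_top_or_eq ha hb with h | h
  · rcases hA.sup_eq_top_or_eq ha (hA.star_mem_coAt hb) with h' | h'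
    · exact absurd ⟨h, h'⟩ hab
    · exact .inr (by rw [← h', star_star])
  · exact .inl h

lemma coe_apply_star (hA : IsSupDeltaClosed A) {ψ : A ≃o A} (hψ : IsSubAut ψ) (x : A) :
    (ψ ⟨star x, hA.star_mem x.2⟩ : Cube n) = star (ψ x) := by
  have hδ := hA.delta_mem ⊤ hA.top_mem x x.2 le_top
  have h := hψ ⟨⊤, hA.top_mem⟩ x le_top hδ
  rw [orderIso_apply_top] at h
  have hx : (⟨star x, hA.star_mem x.2⟩ : A) = ⟨delta ⊤ x, hδ⟩ :=
    Subtype.ext (delta_top (x : Cube n)).symm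
  rw [hx]
  exact h.trans (delta_top _)

lemma eq_of_eq_on_coAt (hA : IsSupDeltaClosed A) (ψ : A ≃o A) (σ : Cube n ≃o Cube n)
    (h : ∀ a : A, (a : Cube n) ∈ coAt A → σ a = ψ a) (x : A) : σ x = ψ x := by
  have himage : σ '' {a | a ∈ coAt A ∧ ↑x ≤ a} = {b | b ∈ coAt A ∧ ↑(ψ x) ≤ b} := by
    ext b
    constructor
    · rintro ⟨a, ⟨ha, hxa⟩, rfl⟩
      lift a to A using ha.1
      rw [h a ha]
      exact ⟨(coe_orderIso_apply_mem_coAt_iff hA.top_mem ψ a).mpr ha, ψ.le_iff_le.mpr hxa⟩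
    · rintro ⟨hb, hxb⟩
      lift b to A using hb.1
      have hb' : (ψ.symm b : Cube n) ∈ coAt A :=
        (coe_orderIso_apply_mem_coAt_iff hA.top_mem ψ.symm b).mpr hb
      exact ⟨ψ.symm b, ⟨hb', ψ.le_symm_apply.mpr hxb⟩, by rw [h _ hb', ψ.apply_symm_apply]⟩
  exact (σ.isGLB_image'.mpr (hA.isGLB_coAt x.2)).unique (himage ▸ hA.isGLB_coAt (ψ x).2)

lemma exists_signedPerm_eq_on_coAt (hA : IsSupDeltaClosed A) {ψ : A ≃o A} (hψ : IsSubAut ψ)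
    (hcorank : ∀ a : A, (a : Cube n) ∈ coAt A → corank (ψ a : Cube n) = corank (a : Cube n)) :
    ∃ π F, ∀ a : A, (a : Cube n) ∈ coAt A → signedPerm π F a = (ψ a : Cube n) := by
  classical
  let g : Cube n → Cube n := fun z => if h : z ∈ A then ψ ⟨z, h⟩ else z
  have hg (a : A) : g a = ψ a := dif_pos a.2
  obtain ⟨π, F, hσ⟩ := exists_signedPerm_eqOn (g := g) hA.isSeparated_coAt
    (fun _ => hA.star_mem_coAt)
    (fun a ha => by
      lift a to A using ha.1
      rw [hg]
      exact (coe_orderIso_apply_mem_coAt_iff hA.top_mem ψ a).mpr ha)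
    (fun a ha b hb hab => by
      lift a to A using ha.1
      lift b to A using hb.1
      rw [hg, hg] at hab
      exact congrArg _ (ψ.injective (Subtype.ext hab)))
    (fun a ha => by
      lift a to A using ha.1
      rw [hg, ← hA.coe_apply_star hψ]
      exact hg ⟨_, hA.star_mem a.2⟩)
    (fun a ha => by
      lift a to A using ha.1
      rw [hg]
      exact hcorank a ha)
  exact ⟨π, F, fun a ha => (hσ ha).trans (hg a)⟩

end IsSupDeltaClosed

end Cube

/-- An automorphism `ψ` of an MR-subalgebra `A` of `𝓛ₙ` extends to an
automorphism of `𝓛ₙ` stabilizing `A` iff `ψ[Γᵢ] = Γᵢ` for all `i`. -/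
theorem extend_iff_typeSet_invariant (n : ℕ) (A : Set (Cube n)) (hA : Cube.IsMRSub A)
    (ψ : A ≃o A) (hψ : Cube.IsSubAut ψ) :
    (∃ φ ∈ Cube.AutSet n, φ '' A = A ∧ ∀ x : A, φ ↑x = ↑(ψ x)) ↔
      ∀ i, (fun a : A => (ψ a : Cube n)) '' {a : A | (a : Cube n) ∈ Cube.typeSet A i} =
        Cube.typeSet A i := by
  open Cube in
  have hA' := hA.isSupDeltaClosed
  constructor
  · rintro ⟨φ, -, -, hφψ⟩ i
    refine Set.image_coe_perm_eq_of_mem_iff ψ.toEquiv (fun a ha => ha.1.1) fun a => ?_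
    simp only [typeSet, Set.mem_ofPred_eq, OrderIso.coe_toEquiv,
      coe_orderIso_apply_mem_coAt_iff hA'.top_mem]
    rw [← hφψ, ncard_coatomsAbove_map]
  · intro hΓ
    have hcorank (a : A) (ha : (a : Cube n) ∈ coAt A) :
        corank (ψ a : Cube n) = corank (a : Cube n) := by
      have : (ψ a : Cube n) ∈ typeSet A (corank (a : Cube n)) := by
        rw [← hΓ]
        exact ⟨a, ⟨ha, ncard_coatomsAbove _⟩, rfl⟩
      rw [← ncard_coatomsAbove]
      exact this.2
    obtain ⟨π, F, hσ⟩ := hA'.exists_signedPerm_eq_on_coAt hψ hcorank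
    have hσA := hA'.eq_of_eq_on_coAt ψ (signedPerm π F) hσ
    exact ⟨signedPerm π F, isAut_signedPerm π F,
      Set.image_eq_self_of_eq_perm ψ.toEquiv hσA, hσA⟩
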